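/- Let G be a finite weighted directed graph with weights in a unital quantale Σ, T a tree decomposition of G, u and v nodes of G, B_u a bag of T containing u and B_v a bag of T containing v. Then for every bag B lying on the unique simple path in T from B_u to B_v (including the endpoints), d(u, v) = ⨆_{x ∈ B} d(u, x) ⊗ d(x, v). -/

import Mathlib

/-!
Every path from `u` to `v` meets the bag `B`. Otherwise consecutive nodes of the path share a
bag, and the bags containing a node outside `B` form a subtree avoiding `B`, so chaining these
gives a walk in `T` from `B_u` to `B_v` avoiding `B`; but in a tree every such walk passes
through all vertices of the unique path. Cutting each path at a node of `B` and using
monotonicity of `⊗` gives `≤`; `≥` holds because concatenating paths multiplies weights and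
`⊗` distributes over suprema.
-/

/-- A path from `u` to `v` in the directed graph with edge relation `E`. -/
def IsPath {V : Type*} (E : V → V → Prop) (u v : V) (l : List V) : Prop :=
  l ≠ [] ∧ l.head? = some u ∧ l.getLast? = some v ∧ l.Chain' E

/-- The weight of a path: the ordered product of the weights of its edges,
`1` for a 0-length path. -/
def pathWeight {V M : Type*} [Monoid M] (wt : V → V → M) (l : List V) : M :=
  ((l.zip l.tail).map fun p => wt p.1 p.2).prod

/-- The algebraic distance: supremum of the weights of all paths from `u` to `v`. -/
def gdist {V Q : Type*} [CompleteLattice Q] [Monoid Q]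
    (E : V → V → Prop) (wt : V → V → Q) (u v : V) : Q :=
  ⨆ l ∈ {l : List V | IsPath E u v l}, pathWeight wt l

/-- A tree decomposition of the graph with node set `V` and edge relation `E`. -/
structure TreeDecomp (V : Type*) (E : V → V → Prop) (ι : Type*) where
  T : SimpleGraph ι
  isTree : T.IsTree
  bag : ι → Set V
  covers_nodes : ∀ v, ∃ i, v ∈ bag i
  covers_edges : ∀ u v, E u v → ∃ i, u ∈ bag i ∧ v ∈ bag i
  bags_connected : ∀ v, (T.induce {i | v ∈ bag i}).Connected

section Distrib

variable {Q : Type*} [CompleteLattice Q] [Mul Q]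

theorem mul_le_mul_of_sSup_distrib
    (hdl : ∀ (a : Q) (S : Set Q), a * sSup S = ⨆ s ∈ S, a * s)
    (hdr : ∀ (a : Q) (S : Set Q), sSup S * a = ⨆ s ∈ S, s * a)
    {a b c d : Q} (hab : a ≤ b) (hcd : c ≤ d) : a * c ≤ b * d := by
  have hac : a * c ≤ a * d := by
    rw [← sup_eq_right.2 hcd, ← sSup_pair, hdl]
    exact le_iSup₂_of_le c (by simp) le_rfl
  have had : a * d ≤ b * d := by
    rw [← sup_eq_right.2 hab, ← sSup_pair, hdr]
    exact le_iSup₂_of_le a (by simp) le_rfl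
  exact hac.trans had

theorem sSup_mul_sSup_le_of_sSup_distrib
    (hdl : ∀ (a : Q) (S : Set Q), a * sSup S = ⨆ s ∈ S, a * s)
    (hdr : ∀ (a : Q) (S : Set Q), sSup S * a = ⨆ s ∈ S, s * a)
    {S T : Set Q} {c : Q} (h : ∀ s ∈ S, ∀ t ∈ T, s * t ≤ c) : sSup S * sSup T ≤ c := by
  rw [hdr]
  refine iSup₂_le fun s hs => ?_
  rw [hdl]
  exact iSup₂_le (h s hs)

end Distrib

section Paths

variable {V : Type*} {E : V → V → Prop} {u v x : V}

theorem isPath_iff {l : List V} :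
    IsPath E u v l ↔ l ≠ [] ∧ l.head? = some u ∧ l.getLast? = some v ∧ l.IsChain E :=
  Iff.rfl

theorem isPath_append_cons_iff {l₁ l₂ : List V} :
    IsPath E u v (l₁ ++ x :: l₂) ↔ IsPath E u x (l₁ ++ [x]) ∧ IsPath E x v (x :: l₂) := by
  have hhead : (l₁ ++ x :: l₂).head? = (l₁ ++ [x]).head? := by cases l₁ <;> rfl
  rw [isPath_iff, isPath_iff, isPath_iff, List.isChain_split, hhead]
  simp only [ List.getLast?_append_of_ne_nil _
    (List.cons_ne_nil x _), List.getLast?_singleton, List.head?_cons, ne_eq, List.append_eq_nil_iff,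
    List.cons_ne_nil, and_false, not_false_eq_true, true_and]
  tauto

theorem IsPath.exists_eq_append_singleton {l : List V} (h : IsPath E u x l) :
    ∃ l', l = l' ++ [x] :=
  ⟨l.dropLast, (List.dropLast_append_getLast? x h.2.2.1).symm⟩

theorem IsPath.exists_eq_cons {l : List V} (h : IsPath E x v l) : ∃ l', l = x :: l' := by
  obtain ⟨hne, hhead, -⟩ := h
  obtain ⟨a, l', rfl⟩ := List.exists_cons_of_ne_nil hne
  exact ⟨l', by simpa using hhead⟩

theorem pathWeight_append_cons {M : Type*} [Monoid M] (wt : V → V → M) (x : V) :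
    ∀ l₁ l₂ : List V,
      pathWeight wt (l₁ ++ x :: l₂) = pathWeight wt (l₁ ++ [x]) * pathWeight wt (x :: l₂)
  | [], _ => by simp [pathWeight]
  | [_], _ => by simp [pathWeight]
  | a :: b :: t, l₂ => by
      have ih := pathWeight_append_cons wt x (b :: t) l₂
      simp only [List.cons_append] at ih ⊢
      change wt a b * pathWeight wt _ = wt a b * pathWeight wt _ * _
      rw [ih, mul_assoc]


theorem isPath_cons_cons_iff {a b : V} {l : List V} :
    IsPath E u v (a :: b :: l) ↔ a = u ∧ E a b ∧ IsPath E b v (b :: l) := by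
  simp only [isPath_iff, List.isChain_cons_cons, List.head?_cons, Option.some.injEq, ne_eq,
    reduceCtorEq, not_false_eq_true, true_and, List.getLast?_cons_cons]
  tauto

def Separates (E : V → V → Prop) (S : Set V) (u v : V) : Prop :=
  ∀ l, IsPath E u v l → ∃ x ∈ S, x ∈ l

section Distance

variable {Q : Type*} [CompleteLattice Q] [Monoid Q] {wt : V → V → Q}

theorem gdist_eq_sSup : gdist E wt u v = sSup (pathWeight wt '' {l | IsPath E u v l}) :=
  sSup_image.symm

theorem gdist_mul_gdist_le
    (hdl : ∀ (a : Q) (S : Set Q), a * sSup S = ⨆ s ∈ S, a * s)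
    (hdr : ∀ (a : Q) (S : Set Q), sSup S * a = ⨆ s ∈ S, s * a) :
    gdist E wt u x * gdist E wt x v ≤ gdist E wt u v := by
  rw [gdist_eq_sSup, gdist_eq_sSup]
  refine sSup_mul_sSup_le_of_sSup_distrib hdl hdr ?_
  rintro _ ⟨l, hl, rfl⟩ _ ⟨m, hm, rfl⟩
  obtain ⟨l', rfl⟩ := hl.exists_eq_append_singleton
  obtain ⟨m', rfl⟩ := hm.exists_eq_cons
  rw [← pathWeight_append_cons]
  exact le_iSup₂_of_le _ (isPath_append_cons_iff.2 ⟨hl, hm⟩) le_rfl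

theorem gdist_le_iSup_of_separates
    (hdl : ∀ (a : Q) (S : Set Q), a * sSup S = ⨆ s ∈ S, a * s)
    (hdr : ∀ (a : Q) (S : Set Q), sSup S * a = ⨆ s ∈ S, s * a)
    {S : Set V} (hS : Separates E S u v) :
    gdist E wt u v ≤ ⨆ x ∈ S, gdist E wt u x * gdist E wt x v := by
  refine iSup₂_le fun l hl => ?_
  obtain ⟨x, hxS, hxl⟩ := hS l hl
  obtain ⟨l₁, l₂, rfl⟩ := List.append_of_mem hxl
  obtain ⟨h₁, h₂⟩ := isPath_append_cons_iff.1 hl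
  rw [pathWeight_append_cons]
  exact le_iSup₂_of_le x hxS <| mul_le_mul_of_sSup_distrib hdl hdr
    (le_iSup₂_of_le _ h₁ le_rfl) (le_iSup₂_of_le _ h₂ le_rfl)

theorem gdist_eq_iSup_of_separates
    (hdl : ∀ (a : Q) (S : Set Q), a * sSup S = ⨆ s ∈ S, a * s)
    (hdr : ∀ (a : Q) (S : Set Q), sSup S * a = ⨆ s ∈ S, s * a)
    {S : Set V} (hS : Separates E S u v) :
    gdist E wt u v = ⨆ x ∈ S, gdist E wt u x * gdist E wt x v :=
  (gdist_le_iSup_of_separates hdl hdr hS).antisymm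
    (iSup₂_le fun _ _ => gdist_mul_gdist_le hdl hdr)

end Distance

end Paths

theorem SimpleGraph.IsAcyclic.mem_support_of_isPath {ι : Type*} {G : SimpleGraph ι}
    (hG : G.IsAcyclic) {i j b : ι} {p : G.Walk i j} (hp : p.IsPath) (hb : b ∈ p.support)
    (q : G.Walk i j) : b ∈ q.support := by
  classical
  have hq : q.toPath = ⟨p, hp⟩ := (hG.subsingleton_path i j).elim _ _
  exact q.support_toPath_subset_support (hq ▸ hb)

namespace TreeDecomp

variable {V ι : Type*} {E : V → V → Prop} (td : TreeDecomp V E ι)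

theorem exists_walk_not_mem_support_of_mem_bag {w : V} {b i j : ι} (hwb : w ∉ td.bag b)
    (hi : w ∈ td.bag i) (hj : w ∈ td.bag j) : ∃ q : td.T.Walk i j, b ∉ q.support := by
  obtain ⟨q⟩ := (td.bags_connected w).preconnected ⟨i, hi⟩ ⟨j, hj⟩
  refine ⟨q.map ⟨Subtype.val, id⟩, ?_⟩
  simp only [SimpleGraph.Walk.support_map, List.mem_map, not_exists, not_and]
  rintro ⟨k, hk⟩ - rfl
  exact hwb hk

theorem exists_walk_not_mem_support_of_isPath {b : ι} {l : List V}
    (hlb : ∀ x ∈ l, x ∉ td.bag b) {x y : V} (hl : IsPath E x y l) {i j : ι}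
    (hi : x ∈ td.bag i) (hj : y ∈ td.bag j) : ∃ q : td.T.Walk i j, b ∉ q.support := by
  induction l generalizing x i with
  | nil => exact absurd rfl hl.1
  | cons c t ih =>
    obtain rfl : c = x := by simpa using hl.2.1
    cases t with
    | nil =>
      obtain rfl : c = y := by simpa using hl.2.2.1
      exact td.exists_walk_not_mem_support_of_mem_bag (hlb c (by simp)) hi hj
    | cons d t =>
      obtain ⟨-, hcd, hdt⟩ := isPath_cons_cons_iff.1 hl
      obtain ⟨k, hck, hdk⟩ := td.covers_edges c d hcd
      obtain ⟨q₁, hq₁⟩ := td.exists_walk_not_mem_support_of_mem_bag (hlb c (by simp)) hi hck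
      obtain ⟨q₂, hq₂⟩ := ih (fun z hz => hlb z (List.mem_cons_of_mem c hz)) hdt hdk
      refine ⟨q₁.append q₂, ?_⟩
      rw [SimpleGraph.Walk.mem_support_append_iff]
      tauto

theorem separates_bag {u v : V} {iu iv b : ι} (hu : u ∈ td.bag iu) (hv : v ∈ td.bag iv)
    {p : td.T.Walk iu iv} (hp : p.IsPath) (hb : b ∈ p.support) : Separates E (td.bag b) u v := by
  intro l hl
  by_contra! hlb
  obtain ⟨q, hq⟩ := td.exists_walk_not_mem_support_of_isPath (fun x hx hxb => hlb x hxb hx) hl hu hv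
  exact hq (td.isTree.isAcyclic.mem_support_of_isPath hp hb q)

end TreeDecomp

theorem stmt_4_general {V ι Q : Type*} [CompleteLattice Q] [Monoid Q]
    (hdl : ∀ (a : Q) (S : Set Q), a * sSup S = ⨆ s ∈ S, a * s)
    (hdr : ∀ (a : Q) (S : Set Q), sSup S * a = ⨆ s ∈ S, s * a)
    (E : V → V → Prop) (wt : V → V → Q) (td : TreeDecomp V E ι)
    (u v : V) (iu iv : ι) (hu : u ∈ td.bag iu) (hv : v ∈ td.bag iv)
    (p : td.T.Walk iu iv) (hp : p.IsPath) (B : ι) (hB : B ∈ p.support) :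
    gdist E wt u v = ⨆ x ∈ td.bag B, gdist E wt u x * gdist E wt x v :=
  gdist_eq_iSup_of_separates hdl hdr (td.separates_bag hu hv hp hB)

/-- Let G be a finite weighted directed graph with weights in a unital
quantale Σ, T a tree decomposition of G, u and v nodes of G, B_u a bag of T containing u
and B_v a bag of T containing v. Then for every bag B lying on the unique simple path in
T from B_u to B_v (including the endpoints), d(u, v) = ⨆_{x ∈ B} d(u, x) ⊗ d(x, v). -/
theorem stmt_4 {V ι Q : Type*} [Fintype V] [Fintype ι] [CompleteLattice Q] [Monoid Q]
    (hdl : ∀ (a : Q) (S : Set Q), a * sSup S = ⨆ s ∈ S, a * s)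
    (hdr : ∀ (a : Q) (S : Set Q), sSup S * a = ⨆ s ∈ S, s * a)
    (E : V → V → Prop) (wt : V → V → Q) (td : TreeDecomp V E ι)
    (u v : V) (iu iv : ι) (hu : u ∈ td.bag iu) (hv : v ∈ td.bag iv)
    (p : td.T.Walk iu iv) (hp : p.IsPath) (B : ι) (hB : B ∈ p.support) :
    gdist E wt u v = ⨆ x ∈ td.bag B, gdist E wt u x * gdist E wt x v :=
  stmt_4_general hdl hdr E wt td u v iu iv hu hv p hp B hB
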